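/- Let κ_1, …, κ_n be real numbers, let 1 ≤ m ≤ n be such that κ_1, …, κ_m are pairwise distinct, let 0 ≤ k ≤ n, and let C be a real number. If μ_k^{\{i\}} = C for every i ∈ {1, …, m}, then μ_k^J = C for every nonempty subset J ⊆ {1, …, m}. -/

import Mathlib

/-- `mu κ J k` is the `k`-th elementary symmetric function of the values `κ i`
with indices `i` outside `J`, with the conventions `mu κ J 0 = 1` and
`mu κ J k = 0` for `k < 0`. -/
noncomputable def mu {n : ℕ} (κ : Fin n → ℝ) (J : Finset (Fin n)) (k : ℤ) : ℝ :=
  if k < 0 then 0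
  else ∑ T ∈ (Finset.univ \ J).powersetCard k.toNat, ∏ i ∈ T, κ i

/-!
Removing an index `i ∈ J` gives `μ_k^{J \ {i}} = μ_k^J + κ_i μ_{k-1}^J`. If `i ≠ j` in `J`
and both `μ_k^{J \ {i}}` and `μ_k^{J \ {j}}` equal `C`, subtracting the two identities gives
`(κ_i - κ_j) μ_{k-1}^J = 0`, so `μ_{k-1}^J = 0` by distinctness and hence `μ_k^J = C`.
Strong induction on `J`, starting from the singletons, finishes the proof.
-/

open Finset

theorem Multiset.esymm_cons_succ {R : Type*} [CommSemiring R] (a : R) (s : Multiset R) (k : ℕ) :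
    (a ::ₘ s).esymm (k + 1) = s.esymm (k + 1) + a * s.esymm k := by
  simp [Multiset.esymm, Multiset.powersetCard_cons, Multiset.sum_map_mul_left]

section

variable {n : ℕ} (κ : Fin n → ℝ)

theorem mu_natCast_eq_esymm (J : Finset (Fin n)) (k : ℕ) :
    mu κ J k = ((univ \ J).val.map κ).esymm k := by
  rw [Finset.esymm_map_val]
  simp [mu]

theorem mu_erase {J : Finset (Fin n)} {i : Fin n} (hi : i ∈ J) (k : ℕ) :
    mu κ (J.erase i) k = mu κ J k + κ i * mu κ J (k - 1) := by
  cases k with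
  | zero => simp [mu]
  | succ k =>
    have hcompl : univ \ J.erase i = insert i (univ \ J) := by
      ext x
      by_cases hx : x = i <;> simp [hx, hi]
    rw [Nat.cast_succ, add_sub_cancel_right, ← Nat.cast_succ, mu_natCast_eq_esymm,
      mu_natCast_eq_esymm, mu_natCast_eq_esymm, hcompl,
      insert_val_of_notMem (by simp [hi]), Multiset.map_cons, Multiset.esymm_cons_succ]

variable {κ}

theorem mu_eq_of_mu_erase_eq {J : Finset (Fin n)} {i j : Fin n} (hi : i ∈ J) (hj : j ∈ J)
    (hκ : κ i ≠ κ j) {k : ℕ} {C : ℝ} (hCi : mu κ (J.erase i) k = C)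
    (hCj : mu κ (J.erase j) k = C) : mu κ J k = C := by
  rw [mu_erase κ hi] at hCi
  rw [mu_erase κ hj] at hCj
  have hprev : mu κ J (k - 1) = 0 := by
    have : (κ i - κ j) * mu κ J (k - 1) = 0 := by linear_combination hCi - hCj
    exact (mul_eq_zero.1 this).resolve_left (sub_ne_zero.2 hκ)
  rwa [hprev, mul_zero, add_zero] at hCi

theorem mu_eq_of_injOn_of_mu_singleton_eq {S : Set (Fin n)} (hS : Set.InjOn κ S)
    {k : ℕ} {C : ℝ} (h : ∀ i ∈ S, mu κ {i} k = C) (J : Finset (Fin n)) (hJ : J.Nonempty)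
    (hJS : ↑J ⊆ S) :
    mu κ J k = C := by
  induction J using Finset.strongInduction with
  | H J ih =>
    obtain ⟨i, rfl⟩ | ⟨i, hi, j, hj, hij⟩ := hJ.exists_eq_singleton_or_nontrivial
    · exact h i (hJS (mem_singleton_self i))
    · have ih_erase {l : Fin n} (hl : l ∈ J) (hne : (J.erase l).Nonempty) :
          mu κ (J.erase l) k = C :=
        ih _ (erase_ssubset hl) hne ((coe_subset.2 (erase_subset l J)).trans hJS)
      exact mu_eq_of_mu_erase_eq hi hj (hS.ne (hJS hi) (hJS hj) hij)
        (ih_erase hi ⟨j, mem_erase.2 ⟨hij.symm, hj⟩⟩)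
        (ih_erase hj ⟨i, mem_erase.2 ⟨hij, hi⟩⟩)

end

theorem mu_eq_of_mu_singleton_eq_general
    (n : ℕ) (κ : Fin n → ℝ) (m : ℕ)
    (hdist : ∀ i j : Fin n, (i : ℕ) < m → (j : ℕ) < m → i ≠ j → κ i ≠ κ j)
    (k : ℕ) (C : ℝ)
    (h : ∀ i : Fin n, (i : ℕ) < m → mu κ {i} (k : ℤ) = C) :
    ∀ J : Finset (Fin n), J.Nonempty → (∀ i ∈ J, (i : ℕ) < m) →
      mu κ J (k : ℤ) = C := by
  intro J hJ hJm
  have hinj : Set.InjOn κ {i | (i : ℕ) < m} := fun i hi j hj hκ =>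
    by_contra fun hij => hdist i j hi hj hij hκ
  exact mu_eq_of_injOn_of_mu_singleton_eq hinj h J hJ hJm

/-- If `κ_1, …, κ_m` are pairwise distinct and `μ_k^{{i}} = C` for every
`i ∈ {1, …, m}`, then `μ_k^J = C` for every nonempty subset `J ⊆ {1, …, m}`. -/
theorem mu_eq_of_mu_singleton_eq
    (n : ℕ) (κ : Fin n → ℝ) (m : ℕ) (hm1 : 1 ≤ m) (hmn : m ≤ n)
    (hdist : ∀ i j : Fin n, (i : ℕ) < m → (j : ℕ) < m → i ≠ j → κ i ≠ κ j)
    (k : ℕ) (hk : k ≤ n) (C : ℝ)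
    (h : ∀ i : Fin n, (i : ℕ) < m → mu κ {i} (k : ℤ) = C) :
    ∀ J : Finset (Fin n), J.Nonempty → (∀ i ∈ J, (i : ℕ) < m) →
      mu κ J (k : ℤ) = C :=
  mu_eq_of_mu_singleton_eq_general n κ m hdist k C h
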